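/- Let f : ℝ^d → ℝ be CPWL with compatible polyhedral partition (R_k)_{k=1}^K. Suppose that for every pair of neighboring regions R_k ∼ R_ℓ there exist x ∈ F_{k,ℓ}, a vector v ∈ ℝ^d not in the linear span of (R_k ∩ R_ℓ) − x, and ε > 0 such that the restriction of f to the segment [x − εv, x + εv] is convex. Then for every pair of neighboring regions R_k ∼ R_ℓ there exist points x_k ∈ int(R_k) and x_ℓ ∈ int(R_ℓ) such that the segment [x_k, x_ℓ] meets F_{k,ℓ} and ⟨∇f(x_k) − ∇f(x_ℓ), x_k − x_ℓ⟩ ≥ 0. -/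

import Mathlib

open Set Metric
open scoped RealInnerProductSpace

/-- A convex polyhedron in `ℝ^d`: a nonempty intersection of finitely many closed half-spaces. -/
def IsConvexPolyhedron {d : ℕ} (S : Set (EuclideanSpace ℝ (Fin d))) : Prop :=
  S.Nonempty ∧ ∃ (m : ℕ) (a : Fin m → EuclideanSpace ℝ (Fin d)) (c : Fin m → ℝ),
    S = {x | ∀ i, ⟪a i, x⟫ ≤ c i}

/-- A polyhedral partition of `ℝ^d`: a finite family of convex polyhedra covering `ℝ^d`,
each with nonempty interior, and with pairwise disjoint interiors. -/
def IsPolyhedralPartition {d K : ℕ} (R : Fin K → Set (EuclideanSpace ℝ (Fin d))) : Prop :=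
  (∀ k, IsConvexPolyhedron (R k)) ∧
  (⋃ k, R k) = Set.univ ∧
  (∀ k, (interior (R k)).Nonempty) ∧
  (∀ k l, k ≠ l → interior (R k) ∩ interior (R l) = ∅)

/-- Regions `R k` and `R l` are neighboring: `k ≠ l` and the affine hull of `R k ∩ R l`
is an affine hyperplane, i.e. has dimension `d - 1`. -/
def Neighboring {d K : ℕ} (R : Fin K → Set (EuclideanSpace ℝ (Fin d))) (k l : Fin K) : Prop :=
  k ≠ l ∧ (R k ∩ R l).Nonempty ∧
    Module.finrank ℝ (affineSpan ℝ (R k ∩ R l)).direction = d - 1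

/-- The frontier between two regions: the relative interior of `R k ∩ R l`. -/
noncomputable def frontierBetween {d K : ℕ} (R : Fin K → Set (EuclideanSpace ℝ (Fin d)))
    (k l : Fin K) : Set (EuclideanSpace ℝ (Fin d)) :=
  intrinsicInterior ℝ (R k ∩ R l)

/-- The set `𝓕` of all frontier points: the union of all frontiers between
neighboring regions. -/
noncomputable def frontierPoints {d K : ℕ} (R : Fin K → Set (EuclideanSpace ℝ (Fin d))) :
    Set (EuclideanSpace ℝ (Fin d)) :=
  ⋃ (k) (l) (_ : Neighboring R k l), frontierBetween R k l

-- helper 1: polyhedra are convex and closed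
lemma poly_convex {d : ℕ} {S : Set (EuclideanSpace ℝ (Fin d))} (h : IsConvexPolyhedron S) :
    Convex ℝ S := by
  obtain ⟨-, m, a, c, rfl⟩ := h
  intro p hp q hq α β hα hβ hαβ i
  have := hp i; have := hq i
  simp only [Set.mem_setOf_eq] at *
  rw [inner_add_right, real_inner_smul_right, real_inner_smul_right]
  calc α * ⟪a i, p⟫ + β * ⟪a i, q⟫ ≤ α * c i + β * c i :=
        add_le_add (mul_le_mul_of_nonneg_left (hp i) hα) (mul_le_mul_of_nonneg_left (hq i) hβ)
    _ = c i := by rw [← add_mul, hαβ, one_mul]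

lemma poly_closed {d : ℕ} {S : Set (EuclideanSpace ℝ (Fin d))} (h : IsConvexPolyhedron S) :
    IsClosed S := by
  obtain ⟨-, m, a, c, rfl⟩ := h
  have : {x : EuclideanSpace ℝ (Fin d) | ∀ i, ⟪a i, x⟫ ≤ c i} =
      ⋂ i, {x | ⟪a i, x⟫ ≤ c i} := by ext x; simp
  rw [this]
  exact isClosed_iInter fun i =>
    isClosed_le (Continuous.inner continuous_const continuous_id) continuous_const

-- helper: disjoint interiors + convexity upgrade
lemma interior_inter_empty {E : Type*} [NormedAddCommGroup E] [NormedSpace ℝ E]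
    {C D : Set E} (hD : Convex ℝ D) (hDi : (interior D).Nonempty)
    (h : interior C ∩ interior D = ∅) : interior C ∩ D = ∅ := by
  by_contra hne
  obtain ⟨z, hzC, hzD⟩ := Set.nonempty_iff_ne_empty.mpr hne
  obtain ⟨w, hw⟩ := hDi
  obtain ⟨r, hr, hball⟩ := Metric.isOpen_iff.mp isOpen_interior z hzC
  set t : ℝ := min (1/2) (r / (2 * (‖w - z‖ + 1))) with ht
  have hwz : (0:ℝ) < ‖w - z‖ + 1 := by positivity
  have ht0 : 0 < t := by
    apply lt_min (by norm_num)
    positivity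
  have ht1 : t ≤ 1/2 := min_le_left _ _
  have hzz : z + t • (w - z) ∈ interior D :=
    hD.add_smul_sub_mem_interior hzD hw ⟨ht0, by linarith⟩
  have hzz2 : z + t • (w - z) ∈ interior C := by
    apply hball
    have : dist (z + t • (w - z)) z = t * ‖w - z‖ := by
      rw [dist_eq_norm]
      simp [norm_smul, abs_of_pos ht0]
    rw [Metric.mem_ball, this]
    have h2 : t ≤ r / (2 * (‖w - z‖ + 1)) := min_le_right _ _
    have : t * ‖w - z‖ ≤ r / (2 * (‖w - z‖ + 1)) * ‖w - z‖ :=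
      mul_le_mul_of_nonneg_right h2 (norm_nonneg _)
    have hlt : r / (2 * (‖w - z‖ + 1)) * ‖w - z‖ < r := by
      rw [div_mul_eq_mul_div, div_lt_iff₀ (by positivity)]
      nlinarith [norm_nonneg (w - z)]
    linarith
  exact absurd (Set.mem_inter hzz2 hzz) (by rw [h]; exact Set.notMem_empty _)

-- helper: half-ball around a relative-interior frontier point is in the interior
lemma halfball_subset {E : Type*} [NormedAddCommGroup E] [InnerProductSpace ℝ E]
    {C : Set E} (hC : Convex ℝ C) {x n : E} {ρ : ℝ} (hρ : 0 < ρ)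
    (hA : ∀ y : E, ⟪n, y - x⟫ = 0 → dist y x < ρ → y ∈ C)
    {w : E} (hw : w ∈ interior C) (hw0 : ⟪n, w - x⟫ ≠ 0) :
    ∃ η > 0, ∀ z : E, dist z x < η → 0 < ⟪n, z - x⟫ * ⟪n, w - x⟫ → z ∈ interior C := by
  set δ : ℝ := |⟪n, w - x⟫| with hδ
  have hδ0 : 0 < δ := abs_pos.mpr hw0
  refine ⟨min (δ / (2 * (‖n‖ + 1))) (ρ / (2 * (1 + ‖n‖ * ‖w - x‖ / δ))),
    lt_min (by positivity) (by positivity), ?_⟩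
  intro z hdist hsign
  set s : ℝ := ⟪n, z - x⟫ / ⟪n, w - x⟫ with hs
  have hn0 : (0:ℝ) < ‖n‖ := by
    rcases eq_or_ne n 0 with h | h
    · exact absurd (by simp [h, inner_zero_left] : ⟪n, w - x⟫ = 0) hw0
    · exact norm_pos_iff.mpr h
  have hw2 : (0:ℝ) < ⟪n, w - x⟫ ^ 2 := by positivity
  have hs0 : 0 < s := by
    have h2 : s = ⟪n, z - x⟫ * ⟪n, w - x⟫ / ⟪n, w - x⟫ ^ 2 := by
      rw [hs]; field_simp
    rw [h2]; positivity
  have key : s * δ ≤ ‖n‖ * ‖z - x‖ :=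
    calc s * δ = |s * ⟪n, w - x⟫| := by
          rw [abs_mul, abs_of_nonneg hs0.le, hδ]
      _ = |⟪n, z - x⟫| := by rw [hs, div_mul_cancel₀ _ hw0]
      _ ≤ ‖n‖ * ‖z - x‖ := abs_real_inner_le_norm _ _
  have hdz : ‖z - x‖ = dist z x := (dist_eq_norm z x).symm
  have hd1 : ‖z - x‖ < δ / (2 * (‖n‖ + 1)) := by
    rw [hdz]; exact hdist.trans_le (min_le_left _ _)
  have hs_half : s ≤ 1/2 := by
    have h1 : ‖z - x‖ * (2 * (‖n‖ + 1)) < δ :=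
      (lt_div_iff₀ (by positivity)).mp hd1
    nlinarith [key, mul_le_mul_of_nonneg_left h1.le hn0.le, norm_nonneg (z - x), hδ0, hs0]
  have h1s : (0:ℝ) < 1 - s := by linarith
  set a : E := (1 - s)⁻¹ • (z - s • w) with ha
  have hax : a - x = (1 - s)⁻¹ • ((z - x) - s • (w - x)) := by
    rw [ha]; match_scalars <;> (field_simp; try ring)
  have haside : ⟪n, a - x⟫ = 0 := by
    rw [hax, real_inner_smul_right, inner_sub_right, real_inner_smul_right,
      hs, div_mul_cancel₀ _ hw0]
    ring
  set B : ℝ := 1 + ‖n‖ * ‖w - x‖ / δ with hB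
  have hB0 : (0:ℝ) < B := by positivity
  have hd2 : ‖z - x‖ < ρ / (2 * B) := by
    rw [hdz]; exact hdist.trans_le (min_le_right _ _)
  have hadist : dist a x < ρ := by
    have h3 : ‖a - x‖ ≤ (1 - s)⁻¹ * (‖z - x‖ + s * ‖w - x‖) := by
      rw [hax, norm_smul, Real.norm_eq_abs, abs_of_pos (inv_pos.mpr h1s)]
      refine mul_le_mul_of_nonneg_left ?_ (inv_pos.mpr h1s).le
      calc ‖(z - x) - s • (w - x)‖ ≤ ‖z - x‖ + ‖s • (w - x)‖ := norm_sub_le _ _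
        _ = ‖z - x‖ + s * ‖w - x‖ := by
            rw [norm_smul, Real.norm_eq_abs, abs_of_pos hs0]
    have h4 : (1 - s)⁻¹ ≤ 2 := by
      rw [inv_le_comm₀ h1s (by norm_num)]; linarith
    have h5 : s * ‖w - x‖ ≤ ‖n‖ * ‖z - x‖ * ‖w - x‖ / δ := by
      calc s * ‖w - x‖ = s * δ * δ⁻¹ * ‖w - x‖ := by
            field_simp
        _ ≤ ‖n‖ * ‖z - x‖ * δ⁻¹ * ‖w - x‖ := by
            have := mul_le_mul_of_nonneg_right
              (mul_le_mul_of_nonneg_right key (inv_pos.mpr hδ0).le) (norm_nonneg (w - x))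
            linarith
        _ = ‖n‖ * ‖z - x‖ * ‖w - x‖ / δ := by rw [div_eq_mul_inv]; ring
    have h6 : ‖a - x‖ ≤ 2 * ‖z - x‖ * B := by
      have hnn : 0 ≤ ‖z - x‖ + s * ‖w - x‖ := by positivity
      have : ‖a - x‖ ≤ 2 * (‖z - x‖ + s * ‖w - x‖) :=
        h3.trans (mul_le_mul_of_nonneg_right h4 hnn)
      have hBeq : 2 * ‖z - x‖ * B = 2 * (‖z - x‖ + ‖n‖ * ‖z - x‖ * ‖w - x‖ / δ) := by
        rw [hB]; field_simp
      rw [hBeq]; linarith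
    have h7 : 2 * ‖z - x‖ * B < ρ := by
      have := mul_lt_mul_of_pos_right hd2 hB0
      rw [div_mul_eq_mul_div, mul_comm ρ B, ← div_mul_eq_mul_div] at this
      have hBc : B / (2 * B) = 1/2 := by field_simp
      calc 2 * ‖z - x‖ * B < 2 * (B / (2*B) * ρ) := by nlinarith
        _ = ρ := by rw [hBc]; ring
    rw [dist_eq_norm]; linarith
  have haC : a ∈ C := hA a haside hadist
  have hz_eq : z = s • w + (1 - s) • a := by
    rw [ha, smul_inv_smul₀ (ne_of_gt h1s)]; abel
  rw [hz_eq]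
  exact hC.combo_interior_self_mem_interior hw haC hs0 (by linarith) (by ring)

lemma gradient_of_affine {E : Type*} [NormedAddCommGroup E] [InnerProductSpace ℝ E]
    [CompleteSpace E] {f : E → ℝ} {u : E} {b : ℝ} {p : E}
    (h : ∀ᶠ y in nhds p, f y = ⟪u, y⟫ + b) : gradient f p = u := by
  have h1 : HasFDerivAt (fun y : E => ⟪u, y⟫ + b)
      (InnerProductSpace.toDual ℝ E u : E →L[ℝ] ℝ) p := by
    have he : (InnerProductSpace.toDual ℝ E u : E →L[ℝ] ℝ) = innerSL ℝ u := by
      ext y; simp [InnerProductSpace.toDual_apply_apply]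
    rw [he]
    simpa using ((innerSL ℝ u).hasFDerivAt (x := p)).add_const b
  have h2 := h1.congr_of_eventuallyEq h
  exact (hasGradientAt_iff_hasFDerivAt.mpr h2).gradient

lemma mem_segment_interval {E : Type*} [AddCommGroup E] [Module ℝ E]
    (x v : E) {ε c : ℝ} (hε : 0 < ε) (hc : |c| ≤ ε) :
    x + c • v ∈ segment ℝ (x - ε • v) (x + ε • v) := by
  have h1 := abs_le.mp hc
  refine ⟨(ε - c)/(2*ε), (ε + c)/(2*ε),
    div_nonneg (by linarith [h1.2]) (by linarith),
    div_nonneg (by linarith [h1.1]) (by linarith), ?_, ?_⟩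
  · field_simp; ring
  · match_scalars <;> (field_simp; try ring)

lemma dist_add_smul' {E : Type*} [NormedAddCommGroup E] [NormedSpace ℝ E]
    (x w : E) {t : ℝ} (ht : 0 ≤ t) : dist (x + t • w) x = t * ‖w‖ := by
  rw [dist_eq_norm, add_sub_cancel_left, norm_smul, Real.norm_eq_abs, abs_of_nonneg ht]

set_option maxHeartbeats 2000000 in
/-- For a CPWL function `f` with compatible polyhedral partition `(R k)`: if for every
pair of neighboring regions there exist `x ∈ F_{k,l}`, a direction `v` outside the linear
span of `(R k ∩ R l) - x`, and `ε > 0` such that `f` is convex on `[x - εv, x + εv]`,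
then for every pair of neighboring regions there exist `x_k ∈ int (R k)`,
`x_l ∈ int (R l)` whose segment meets `F_{k,l}` and with
`⟪∇f(x_k) - ∇f(x_l), x_k - x_l⟫ ≥ 0`. -/
theorem cpwl_segment_convexity_implies_minimal {d K : ℕ}
    (R : Fin K → Set (EuclideanSpace ℝ (Fin d)))
    (f : EuclideanSpace ℝ (Fin d) → ℝ)
    (u : Fin K → EuclideanSpace ℝ (Fin d)) (b : Fin K → ℝ)
    (hpart : IsPolyhedralPartition R)
    (hcont : Continuous f)
    (haff : ∀ k, ∀ x ∈ R k, f x = ⟪u k, x⟫ + b k)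
    (hseg : ∀ k l, Neighboring R k l →
      ∃ x ∈ frontierBetween R k l, ∃ v : EuclideanSpace ℝ (Fin d),
        v ∉ Submodule.span ℝ ((fun y => y - x) '' (R k ∩ R l)) ∧
        ∃ ε > (0 : ℝ), ConvexOn ℝ (segment ℝ (x - ε • v) (x + ε • v)) f) :
    ∀ k l, Neighboring R k l →
      ∃ xk ∈ interior (R k), ∃ xl ∈ interior (R l),
        (segment ℝ xk xl ∩ frontierBetween R k l).Nonempty ∧
        0 ≤ ⟪gradient f xk - gradient f xl, xk - xl⟫ := by
  intro k l hN
  obtain ⟨hkl, hSne, hdim⟩ := hN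
  obtain ⟨x, hxF, v, hv, ε, hε, hconv⟩ := hseg k l ⟨hkl, hSne, hdim⟩
  classical
  set S : Set (EuclideanSpace ℝ (Fin d)) := R k ∩ R l with hSdef
  have hxF' : x ∈ intrinsicInterior ℝ S := hxF
  have hxS : x ∈ S := intrinsicInterior_subset hxF'
  have hConvk : Convex ℝ (R k) := poly_convex (hpart.1 k)
  have hConvl : Convex ℝ (R l) := poly_convex (hpart.1 l)
  -- extract a relative ball around x inside S
  obtain ⟨y0, hy0i, hy0x⟩ := hxF'
  obtain ⟨ρ, hρ0, hρball⟩ := Metric.mem_nhds_iff.mp (mem_interior_iff_mem_nhds.mp hy0i)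
  have hρS : ∀ y : EuclideanSpace ℝ (Fin d), y ∈ affineSpan ℝ S → dist y x < ρ → y ∈ S := by
    intro y hyA hyd
    have : (⟨y, hyA⟩ : affineSpan ℝ S) ∈ Metric.ball y0 ρ := by
      rw [Metric.mem_ball, Subtype.dist_eq, hy0x]; exact hyd
    exact hρball this
  have hxA : x ∈ affineSpan ℝ S := subset_affineSpan ℝ S hxS
  -- v is not in the direction of the affine span
  have hv' : v ∉ (affineSpan ℝ S).direction := by
    rw [direction_affineSpan, vectorSpan_eq_span_vsub_set_right ℝ hxS]
    simpa only [vsub_eq_sub] using hv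
  -- d ≥ 1
  rcases Nat.eq_zero_or_pos d with hd0 | hd1
  · exfalso
    apply hv
    have hv0 : v = 0 := by
      subst hd0
      ext i
      exact absurd i.isLt (by omega)
    rw [hv0]
    exact Submodule.zero_mem _
  -- construct a normal vector n
  set P : Submodule ℝ (EuclideanSpace ℝ (Fin d)) := (affineSpan ℝ S).direction with hPdef
  have hPrank : Module.finrank ℝ P = d - 1 := hdim
  have hsum := Submodule.finrank_add_finrank_orthogonal P
  rw [finrank_euclideanSpace_fin] at hsum
  have hPo : Module.finrank ℝ Pᗮ = 1 := by omega
  obtain ⟨n, hnP, hn0⟩ : ∃ n ∈ Pᗮ, n ≠ 0 := by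
    by_contra hcon
    push_neg at hcon
    have hbot : Pᗮ = ⊥ := (Submodule.eq_bot_iff _).mpr hcon
    rw [hbot, finrank_bot] at hPo
    omega
  have hPeq : P = (ℝ ∙ n)ᗮ := by
    apply Submodule.eq_of_le_of_finrank_eq
    · intro p hp
      rw [Submodule.mem_orthogonal_singleton_iff_inner_right]
      rw [real_inner_comm]
      exact (Submodule.mem_orthogonal _ n).mp hnP p hp
    · rw [hPrank]
      have h2 := Submodule.finrank_add_finrank_orthogonal (ℝ ∙ n)
      rw [finrank_span_singleton hn0, finrank_euclideanSpace_fin] at h2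
      omega
  have hmemA : ∀ y : EuclideanSpace ℝ (Fin d), (⟪n, y - x⟫ = 0 ↔ y ∈ affineSpan ℝ S) := by
    intro y
    rw [← AffineSubspace.vsub_right_mem_direction_iff_mem hxA y, ← hPdef, hPeq,
      Submodule.mem_orthogonal_singleton_iff_inner_right, vsub_eq_sub]
  have hAball : ∀ y, ⟪n, y - x⟫ = 0 → dist y x < ρ → y ∈ S :=
    fun y h1 h2 => hρS y ((hmemA y).mp h1) h2
  have hAk : ∀ y, ⟪n, y - x⟫ = 0 → dist y x < ρ → y ∈ R k :=
    fun y h1 h2 => (hAball y h1 h2).1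
  have hAl : ∀ y, ⟪n, y - x⟫ = 0 → dist y x < ρ → y ∈ R l :=
    fun y h1 h2 => (hAball y h1 h2).2
  -- disjointness of interiors with full sets
  have hdisj := hpart.2.2.2 k l hkl
  have hdisj' := hpart.2.2.2 l k (Ne.symm hkl)
  have hKl : interior (R k) ∩ R l = ∅ :=
    interior_inter_empty hConvl (hpart.2.2.1 l) hdisj
  have hLk : interior (R l) ∩ R k = ∅ :=
    interior_inter_empty hConvk (hpart.2.2.1 k) hdisj'
  obtain ⟨wk, hwk⟩ := hpart.2.2.1 k
  obtain ⟨wl, hwl⟩ := hpart.2.2.1 l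
  -- interior points are strictly off the hyperplane
  have hoffside : ∀ (C : Set (EuclideanSpace ℝ (Fin d))), Convex ℝ C → x ∈ C →
      interior C ∩ S = ∅ → ∀ w ∈ interior C, ⟪n, w - x⟫ ≠ 0 := by
    intro C hC hxC hCS w hw h0
    set t : ℝ := min (1/2) (ρ / (2 * (‖w - x‖ + 1))) with htdef
    have ht0 : 0 < t := lt_min (by norm_num) (by positivity)
    have ht1 : t ≤ 1 := le_trans (min_le_left _ _) (by norm_num)
    have hz1 : x + t • (w - x) ∈ interior C :=
      hC.add_smul_sub_mem_interior hxC hw ⟨ht0, ht1⟩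
    have hz2 : x + t • (w - x) ∈ S := by
      apply hAball
      · rw [add_sub_cancel_left, real_inner_smul_right, h0, mul_zero]
      · rw [dist_add_smul' x (w - x) ht0.le]
        have h2 : t ≤ ρ / (2 * (‖w - x‖ + 1)) := min_le_right _ _
        have h3 : ρ / (2 * (‖w - x‖ + 1)) * (2 * (‖w - x‖ + 1)) = ρ :=
          div_mul_cancel₀ _ (by positivity)
        nlinarith [mul_le_mul_of_nonneg_right h2 (norm_nonneg (w - x)),
          div_pos hρ0 (by positivity : (0:ℝ) < 2 * (‖w - x‖ + 1)), norm_nonneg (w - x)]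
    exact absurd (Set.mem_inter hz1 hz2) (by rw [hCS]; exact Set.notMem_empty _)
  have hKS : interior (R k) ∩ S = ∅ :=
    Set.eq_empty_iff_forall_notMem.mpr (fun z hz =>
      Set.eq_empty_iff_forall_notMem.mp hKl z ⟨hz.1, hz.2.2⟩)
  have hLS : interior (R l) ∩ S = ∅ :=
    Set.eq_empty_iff_forall_notMem.mpr (fun z hz =>
      Set.eq_empty_iff_forall_notMem.mp hLk z ⟨hz.1, hz.2.1⟩)
  have hsidek : ⟪n, wk - x⟫ ≠ 0 := hoffside (R k) hConvk hxS.1 hKS wk hwk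
  have hsidel : ⟪n, wl - x⟫ ≠ 0 := hoffside (R l) hConvl hxS.2 hLS wl hwl
  obtain ⟨ηk, hηk0, hηk⟩ := halfball_subset hConvk hρ0 hAk hwk hsidek
  obtain ⟨ηl, hηl0, hηl⟩ := halfball_subset hConvl hρ0 hAl hwl hsidel
  -- the two interior points lie on opposite sides
  have hopp : ⟪n, wk - x⟫ * ⟪n, wl - x⟫ < 0 := by
    by_contra hge
    push_neg at hge
    have hgt : 0 < ⟪n, wk - x⟫ * ⟪n, wl - x⟫ :=
      lt_of_le_of_ne hge (Ne.symm (mul_ne_zero hsidek hsidel))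
    set τ : ℝ := min ηk ηl / (2 * (‖wk - x‖ + 1)) with hτdef
    have hτ0 : 0 < τ := by positivity
    set z := x + τ • (wk - x) with hzdef
    have hdz : dist z x = τ * ‖wk - x‖ := dist_add_smul' x (wk - x) hτ0.le
    have hdzlt : dist z x < min ηk ηl := by
      rw [hdz]
      have h3 : min ηk ηl / (2 * (‖wk - x‖ + 1)) * (2 * (‖wk - x‖ + 1)) = min ηk ηl :=
        div_mul_cancel₀ _ (by positivity)
      nlinarith [norm_nonneg (wk - x), lt_min hηk0 hηl0]
    have hsz : ⟪n, z - x⟫ = τ * ⟪n, wk - x⟫ := by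
      rw [hzdef, add_sub_cancel_left, real_inner_smul_right]
    have hsk2 : 0 < ⟪n, wk - x⟫ * ⟪n, wk - x⟫ := mul_self_pos.mpr hsidek
    have hz_k : z ∈ interior (R k) :=
      hηk z (hdzlt.trans_le (min_le_left _ _)) (by rw [hsz]; nlinarith)
    have hz_l : z ∈ interior (R l) :=
      hηl z (hdzlt.trans_le (min_le_right _ _)) (by rw [hsz]; nlinarith)
    exact absurd (Set.mem_inter hz_k hz_l) (by rw [hdisj]; exact Set.notMem_empty _)
  -- v has a nonzero component along n
  have hvn : ⟪n, v⟫ ≠ 0 := by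
    intro h0
    apply hv'
    rw [hPeq, Submodule.mem_orthogonal_singleton_iff_inner_right]
    exact h0
  obtain ⟨v', hv'def, hv'k⟩ :
      ∃ v', (v' = v ∨ v' = -v) ∧ 0 < ⟪n, v'⟫ * ⟪n, wk - x⟫ := by
    rcases lt_trichotomy (⟪n, v⟫ * ⟪n, wk - x⟫) 0 with h | h | h
    · exact ⟨-v, Or.inr rfl, by rw [inner_neg_right]; nlinarith⟩
    · exact absurd h (mul_ne_zero hvn hsidek)
    · exact ⟨v, Or.inl rfl, h⟩
  have hsk2 : 0 < ⟪n, wk - x⟫ * ⟪n, wk - x⟫ := mul_self_pos.mpr hsidek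
  have hv'l : 0 < (-⟪n, v'⟫) * ⟪n, wl - x⟫ := by nlinarith
  -- choose the step size
  have hvnorm : 0 < ‖v‖ := norm_pos_iff.mpr (fun h => hvn (by simp [h]))
  set t : ℝ := min ε (min ηk ηl / (2 * (‖v‖ + 1))) with htdef
  have ht0 : 0 < t := lt_min hε (by positivity)
  have htε : t ≤ ε := min_le_left _ _
  have htη : t * ‖v‖ < min ηk ηl := by
    have h2 : t ≤ min ηk ηl / (2 * (‖v‖ + 1)) := min_le_right _ _
    have h3 : min ηk ηl / (2 * (‖v‖ + 1)) * (2 * (‖v‖ + 1)) = min ηk ηl :=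
      div_mul_cancel₀ _ (by positivity)
    nlinarith [mul_le_mul_of_nonneg_right h2 hvnorm.le,
      div_pos (lt_min hηk0 hηl0) (by positivity : (0:ℝ) < 2 * (‖v‖ + 1))]
  set xk := x + t • v' with hxkdef
  set xl := x - t • v' with hxldef
  have hv'norm : ‖v'‖ = ‖v‖ := by
    rcases hv'def with h | h <;> rw [h]
    exact norm_neg v
  have hdxk : dist xk x = t * ‖v‖ := by
    rw [hxkdef, dist_add_smul' x v' ht0.le, hv'norm]
  have hdxl : dist xl x = t * ‖v‖ := by
    rw [hxldef, sub_eq_add_neg, ← smul_neg, dist_add_smul' x (-v') ht0.le, norm_neg, hv'norm]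
  have hsxk : ⟪n, xk - x⟫ = t * ⟪n, v'⟫ := by
    rw [hxkdef, add_sub_cancel_left, real_inner_smul_right]
  have hsxl : ⟪n, xl - x⟫ = -(t * ⟪n, v'⟫) := by
    rw [hxldef, sub_sub_cancel_left, inner_neg_right, real_inner_smul_right]
  have hxk_int : xk ∈ interior (R k) := by
    apply hηk xk (by rw [hdxk]; exact htη.trans_le (min_le_left _ _))
    rw [hsxk]; nlinarith
  have hxl_int : xl ∈ interior (R l) := by
    apply hηl xl (by rw [hdxl]; exact htη.trans_le (min_le_right _ _))
    rw [hsxl]; nlinarith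
  -- xk, xl lie in the convexity segment
  have habs : |t| ≤ ε := by rw [abs_of_pos ht0]; exact htε
  have hsegk : xk ∈ segment ℝ (x - ε • v) (x + ε • v) := by
    rcases hv'def with h | h <;> rw [hxkdef, h]
    · exact mem_segment_interval x v hε habs
    · rw [smul_neg, ← neg_smul]
      exact mem_segment_interval x v hε (by rw [abs_neg]; exact habs)
  have hsegl : xl ∈ segment ℝ (x - ε • v) (x + ε • v) := by
    rcases hv'def with h | h <;> rw [hxldef, h]
    · rw [show x - t • v = x + (-t) • v by module]
      exact mem_segment_interval x v hε (by rw [abs_neg]; exact habs)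
    · rw [show x - t • -v = x + t • v by module]
      exact mem_segment_interval x v hε habs
  have hmid : (1/2 : ℝ) • xk + (1/2 : ℝ) • xl = x := by
    rw [hxkdef, hxldef]; match_scalars <;> ring
  -- convexity inequality
  have hcvx := hconv.2 hsegk hsegl (by norm_num : (0:ℝ) ≤ 1/2) (by norm_num : (0:ℝ) ≤ 1/2)
    (by norm_num : (1/2 : ℝ) + 1/2 = 1)
  rw [hmid] at hcvx
  simp only [smul_eq_mul] at hcvx
  have hfk : f xk = ⟪u k, x⟫ + t * ⟪u k, v'⟫ + b k := by
    rw [haff k xk (interior_subset hxk_int), hxkdef, inner_add_right, real_inner_smul_right]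
  have hfl : f xl = ⟪u l, x⟫ - t * ⟪u l, v'⟫ + b l := by
    rw [haff l xl (interior_subset hxl_int), hxldef, inner_sub_right, real_inner_smul_right]
  have hfxk : f x = ⟪u k, x⟫ + b k := haff k x hxS.1
  have hfxl : f x = ⟪u l, x⟫ + b l := haff l x hxS.2
  have hkey : 0 ≤ ⟪u k, v'⟫ - ⟪u l, v'⟫ := by
    by_contra hcon
    push_neg at hcon
    nlinarith [hcvx, hfk, hfl, hfxk, hfxl,
      mul_pos ht0 (show 0 < ⟪u l, v'⟫ - ⟪u k, v'⟫ by linarith)]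
  -- gradients
  have hgk : gradient f xk = u k :=
    gradient_of_affine (Filter.eventually_of_mem (isOpen_interior.mem_nhds hxk_int)
      (fun y hy => haff k y (interior_subset hy)))
  have hgl : gradient f xl = u l :=
    gradient_of_affine (Filter.eventually_of_mem (isOpen_interior.mem_nhds hxl_int)
      (fun y hy => haff l y (interior_subset hy)))
  refine ⟨xk, hxk_int, xl, hxl_int, ⟨x, ?_, hxF⟩, ?_⟩
  · exact ⟨1/2, 1/2, by norm_num, by norm_num, by norm_num, hmid⟩
  · rw [hgk, hgl]
    have hxkl : xk - xl = (2*t) • v' := by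
      rw [hxkdef, hxldef]; match_scalars <;> ring
    rw [hxkl, inner_sub_left, real_inner_smul_right, real_inner_smul_right]
    nlinarith
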